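/- arXiv:0803.1477 — 2 statements merged into one kernel-verified Lean document; each statement's English description precedes it below -/
import Mathlib

section
/- Let G = (V,E) be a finite simple graph, let R be a commutative ring, let v : E → R be edge weights, and let q ∈ R. Then Z_G(q, v) = Σ_{π ∈ Π(V)} ( ∏_{j=0}^{|π|-1} (q - j) ) · ∏_{B ∈ π} ∏_{e ∈ E(G[B])} (1 + v_e), where the sum runs over all partitions π of V into nonempty blocks, |π| is the number of blocks, and E(G[B]) is the edge set of the induced subgraph of G on the block B. -/
open Finset SimpleGraph

/-- The number of connected components of the graph on the vertex set `W`
with edge set `A` (isolated vertices count as components). -/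
noncomputable def kcomp {V : Type*} [Fintype V] [DecidableEq V]
    (W : Finset V) (A : Finset (Sym2 V)) : ℕ :=
  Nat.card ((SimpleGraph.fromEdgeSet (A : Set (Sym2 V))).induce (W : Set V)).ConnectedComponent

/-- The edges of `G` with both endpoints in `W`, i.e. the edges of the
induced subgraph `G[W]`. -/
def edgesWithin {V : Type*} [Fintype V] [DecidableEq V]
    (G : SimpleGraph V) [DecidableRel G.Adj] (W : Finset V) : Finset (Sym2 V) :=
  G.edgeFinset.filter (fun e => ∀ x ∈ e, x ∈ W)

/-- The multivariate Tutte polynomial of the induced subgraph `G[W]`: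
`Z_{G[W]}(q,v) = Σ_{A ⊆ E(G[W])} q^{k(A)} ∏_{e ∈ A} v_e`. -/
noncomputable def Zmv {V : Type*} [Fintype V] [DecidableEq V] {R : Type*} [CommRing R]
    (G : SimpleGraph V) [DecidableRel G.Adj] (W : Finset V) (q : R) (v : Sym2 V → R) : R :=
  ∑ A ∈ (edgesWithin G W).powerset, q ^ kcomp W A * ∏ e ∈ A, v e

/-- `Ẑ_{G[W]}(q,v) = Σ_{A ⊆ E(G[W])} q^{k(A)-1} ∏_{e ∈ A} v_e`. -/
noncomputable def ZhatMv {V : Type*} [Fintype V] [DecidableEq V] {R : Type*} [CommRing R]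
    (G : SimpleGraph V) [DecidableRel G.Adj] (W : Finset V) (q : R) (v : Sym2 V → R) : R :=
  ∑ A ∈ (edgesWithin G W).powerset, q ^ (kcomp W A - 1) * ∏ e ∈ A, v e

/-- The generating polynomial of connected spanning subgraphs of `G[W]`:
`C_{G[W]}(v) = Σ_{A ⊆ E(G[W]) : k(A)=1} ∏_{e ∈ A} v_e`. -/
noncomputable def Cmv {V : Type*} [Fintype V] [DecidableEq V] {R : Type*} [CommRing R]
    (G : SimpleGraph V) [DecidableRel G.Adj] (W : Finset V) (v : Sym2 V → R) : R :=
  ∑ A ∈ (edgesWithin G W).powerset.filter (fun A => kcomp W A = 1), ∏ e ∈ A, v e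

/-!
Expanding `∏ (1 + v e)` over the edges inside the blocks of `π` and exchanging the sums, the
coefficient of `∏ e ∈ A, v e` on the right becomes the sum of `q^{↓|π|}` over the partitions `π`
whose blocks are unions of connected components of `(V, A)`. These are the partitions of the set
of components, and over any finite set `S` one has `∑_ρ q^{↓|ρ|} = q^{|S|}`: adding a point to `S`,
it either becomes a new block of `ρ` or joins one of its `|ρ|` blocks, and
`q^{↓(k+1)} + k q^{↓k} = q q^{↓k}`. Hence the coefficient is `q^{k(A)}`.
-/

namespace Finpartition

variable {α : Type*} [DecidableEq α] {s : Finset α} {a : α} {B : Finset α}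

lemma subset_of_mem_insert_empty (P : Finpartition s) (hB : B ∈ insert ∅ P.parts) : B ⊆ s := by
  rcases mem_insert.1 hB with rfl | hB
  exacts [empty_subset s, P.le hB]

lemma disjoint_of_mem_insert_empty (P : Finpartition s) (hB : B ∈ insert ∅ P.parts)
    {d : Finset α} (hd : d ∈ P.parts) (hdB : d ≠ B) : Disjoint d B := by
  rcases mem_insert.1 hB with rfl | hB
  exacts [disjoint_empty_right d, P.disjoint hd hB hdB]

lemma parts_avoid_of_mem_insert_empty (P : Finpartition s) (hB : B ∈ insert ∅ P.parts) :
    (P.avoid B).parts = P.parts.erase B := by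
  ext c
  rw [mem_avoid, mem_erase]
  constructor
  · rintro ⟨d, hd, hdB, rfl⟩
    have hne : d ≠ B := by rintro rfl; exact hdB le_rfl
    rw [(P.disjoint_of_mem_insert_empty hB hd hne).sdiff_eq_left]
    exact ⟨hne, hd⟩
  · rintro ⟨hcB, hc⟩
    have hdisj := P.disjoint_of_mem_insert_empty hB hc hcB
    exact ⟨c, hc, fun h => P.ne_bot hc (hdisj.eq_bot_of_le h), hdisj.sdiff_eq_left⟩

/-- `B = ∅` encodes adding `a` as a new singleton part. -/
def insertPoint (P : Finpartition s) (ha : a ∉ s) (hB : B ∈ insert ∅ P.parts) :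
    Finpartition (insert a s) :=
  (P.avoid B).extend (insert_ne_empty a B)
    (disjoint_insert_right.2 ⟨fun h => ha (mem_sdiff.1 h).1, sdiff_disjoint⟩)
    (by rw [sup_eq_union, union_insert, sdiff_union_of_subset (P.subset_of_mem_insert_empty hB)])

lemma parts_insertPoint (P : Finpartition s) (ha : a ∉ s) (hB : B ∈ insert ∅ P.parts) :
    (P.insertPoint ha hB).parts = insert (insert a B) (P.parts.erase B) := by
  rw [insertPoint, extend_parts, P.parts_avoid_of_mem_insert_empty hB]

lemma card_parts_insertPoint (P : Finpartition s) (ha : a ∉ s) (hB : B ∈ insert ∅ P.parts) :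
    #(P.insertPoint ha hB).parts = #(P.parts.erase B) + 1 := by
  rw [insertPoint, card_extend, P.parts_avoid_of_mem_insert_empty hB]

lemma part_insertPoint (P : Finpartition s) (ha : a ∉ s) (hB : B ∈ insert ∅ P.parts) :
    (P.insertPoint ha hB).part a = insert a B :=
  part_eq_of_mem _ (by rw [parts_insertPoint]; exact mem_insert_self _ _) (mem_insert_self a B)

def erasePoint (P : Finpartition (insert a s)) (ha : a ∉ s) : Finpartition s :=
  (P.avoid {a}).copy (by rw [sdiff_singleton_eq_erase, erase_insert ha])

lemma mem_erasePoint_parts (P : Finpartition (insert a s)) (ha : a ∉ s) {c : Finset α} :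
    c ∈ (P.erasePoint ha).parts ↔ c ≠ ∅ ∧ ∃ d ∈ P.parts, d.erase a = c := by
  simp only [erasePoint, copy_parts, mem_avoid, ← sdiff_eq_empty_iff_subset,
    sdiff_singleton_eq_erase]
  constructor
  · rintro ⟨d, hd, hne, rfl⟩
    exact ⟨hne, d, hd, rfl⟩
  · rintro ⟨hne, d, hd, rfl⟩
    exact ⟨d, hd, hne, rfl⟩

lemma erasePoint_insertPoint (P : Finpartition s) (ha : a ∉ s) (hB : B ∈ insert ∅ P.parts) :
    (P.insertPoint ha hB).erasePoint ha = P := by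
  have haB : a ∉ B := fun h => ha (P.subset_of_mem_insert_empty hB h)
  have hnot : ∀ d ∈ P.parts, a ∉ d := fun d hd h => ha (P.le hd h)
  ext c
  rw [mem_erasePoint_parts, parts_insertPoint]
  simp only [mem_insert, mem_erase, exists_eq_or_imp, erase_insert haB]
  constructor
  · rintro ⟨hc, rfl | ⟨d, ⟨-, hd⟩, rfl⟩⟩
    · exact (mem_insert.1 hB).resolve_left hc
    · rwa [erase_eq_of_notMem (hnot d hd)]
  · intro hc
    refine ⟨P.ne_empty hc, ?_⟩
    by_cases hcB : c = B
    · exact Or.inl hcB.symm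
    · exact Or.inr ⟨c, ⟨hcB, hc⟩, erase_eq_of_notMem (hnot c hc)⟩

lemma insertPoint_erasePoint (P : Finpartition (insert a s)) (ha : a ∉ s)
    (hB : (P.part a).erase a ∈ insert ∅ (P.erasePoint ha).parts) :
    (P.erasePoint ha).insertPoint ha hB = P := by
  have haP : a ∈ P.part a := P.mem_part_self.2 (mem_insert_self a s)
  have hPa : P.part a ∈ P.parts := P.part_mem.2 (mem_insert_self a s)
  have hnot : ∀ d ∈ P.parts, d ≠ P.part a → a ∉ d := fun d hd hne h =>
    hne (P.eq_of_mem_parts hd hPa h haP)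
  ext c
  rw [parts_insertPoint, insert_erase haP]
  simp only [mem_insert, mem_erase, mem_erasePoint_parts]
  constructor
  · rintro (rfl | ⟨hc, -, d, hd, rfl⟩)
    · exact hPa
    · have hne : d ≠ P.part a := by rintro rfl; exact hc rfl
      rwa [erase_eq_of_notMem (hnot d hd hne)]
  · intro hc
    by_cases hca : c = P.part a
    · exact Or.inl hca
    · obtain ⟨x, hx⟩ := P.nonempty_of_mem_parts hc
      refine Or.inr ⟨fun h => hca (P.eq_of_mem_parts hc hPa hx (mem_of_mem_erase (h ▸ hx))),
        P.ne_empty hc, c, hc, erase_eq_of_notMem (hnot c hc hca)⟩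

lemma erase_part_mem_insert_empty (P : Finpartition (insert a s)) (ha : a ∉ s) :
    (P.part a).erase a ∈ insert ∅ (P.erasePoint ha).parts := by
  by_cases h : (P.part a).erase a = ∅
  · exact h ▸ mem_insert_self _ _
  · exact mem_insert_of_mem ((P.mem_erasePoint_parts ha).2
      ⟨h, P.part a, P.part_mem.2 (mem_insert_self a s), rfl⟩)

lemma sum_card_parts_insert {M : Type*} [AddCommMonoid M] (ha : a ∉ s) (f : ℕ → M) :
    ∑ P : Finpartition (insert a s), f #P.parts
      = ∑ Q : Finpartition s, ∑ B ∈ insert ∅ Q.parts, f (#(Q.parts.erase B) + 1) := by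
  rw [sum_sigma']
  refine sum_bij' (fun P _ => ⟨P.erasePoint ha, (P.part a).erase a⟩)
    (fun x hx => x.1.insertPoint ha (mem_sigma.1 hx).2)
    (fun P _ => mem_sigma.2 ⟨mem_univ _, P.erase_part_mem_insert_empty ha⟩)
    (fun _ _ => mem_univ _) (fun P _ => P.insertPoint_erasePoint ha _) ?_ ?_
  · rintro ⟨Q, B⟩ hx
    have hB := (mem_sigma.1 hx).2
    have haB : a ∉ B := fun h => ha (Q.subset_of_mem_insert_empty hB h)
    exact Sigma.ext (Q.erasePoint_insertPoint ha hB)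
      (heq_of_eq (by rw [part_insertPoint, erase_insert haB]))
  · intro P _
    rw [← card_parts_insertPoint _ ha (P.erase_part_mem_insert_empty ha), insertPoint_erasePoint]

theorem sum_prod_range_sub_card_parts {R : Type*} [CommRing R] (q : R) (s : Finset α) :
    ∑ P : Finpartition s, ∏ j ∈ range #P.parts, (q - j) = q ^ #s := by
  induction s using Finset.induction_on with
  | empty =>
    show ∑ P : Finpartition (⊥ : Finset α), _ = _
    rw [Fintype.sum_unique, default_eq_empty]
    simp
  | insert a s ha ih =>
    rw [sum_card_parts_insert ha (fun k => ∏ j ∈ range k, (q - j)), card_insert_of_notMem ha,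
      pow_succ, ← ih, sum_mul]
    refine sum_congr rfl fun P _ => ?_
    have hcard : ∀ B ∈ P.parts, #(P.parts.erase B) + 1 = #P.parts := fun B hB => by
      rw [card_erase_of_mem hB, Nat.sub_add_cancel (card_pos.2 ⟨B, hB⟩)]
    rw [sum_insert P.empty_notMem_parts, erase_eq_of_notMem P.empty_notMem_parts,
      sum_congr rfl fun B hB => by rw [hcard B hB], sum_const, nsmul_eq_mul,
      prod_range_succ]
    ring

section Fibres

variable {W γ : Type*} [Fintype W] [DecidableEq W] [DecidableEq γ] {c : W → γ}

variable (c) in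
def IsUnionOfFibres (P : Finpartition (univ : Finset W)) : Prop :=
  ∀ x y, c x = c y → P.part x = P.part y

instance : DecidablePred (IsUnionOfFibres c) := fun P => by
  unfold IsUnionOfFibres; infer_instance

lemma IsUnionOfFibres.mem_of_apply_mem_image {P : Finpartition (univ : Finset W)}
    (hP : IsUnionOfFibres c P) {B : Finset W} (hB : B ∈ P.parts) {x : W}
    (hx : c x ∈ B.image c) : x ∈ B := by
  obtain ⟨y, hy, hyx⟩ := mem_image.1 hx
  rw [← P.part_eq_of_mem hB hy, hP y x hyx]
  exact P.mem_part_self.2 (mem_univ x)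

lemma IsUnionOfFibres.filter_apply_mem_image {P : Finpartition (univ : Finset W)}
    (hP : IsUnionOfFibres c P) {B : Finset W} (hB : B ∈ P.parts) :
    univ.filter (fun x => c x ∈ B.image c) = B := by
  ext x
  simp only [mem_filter, mem_univ, true_and]
  exact ⟨hP.mem_of_apply_mem_image hB, mem_image_of_mem c⟩

def image (P : Finpartition (univ : Finset W)) (hP : IsUnionOfFibres c P) :
    Finpartition (univ.image c) :=
  ofExistsUnique (P.parts.image (Finset.image c))
    (by
      simp only [mem_image, forall_exists_index, and_imp, forall_apply_eq_imp_iff₂]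
      exact fun B _ => image_subset_image (subset_univ B))
    (by
      simp only [mem_image, mem_univ, true_and, forall_exists_index, forall_apply_eq_imp_iff]
      intro x
      refine ⟨(P.part x).image c, ⟨⟨_, P.part_mem.2 (mem_univ x), rfl⟩,
        mem_image_of_mem c (P.mem_part_self.2 (mem_univ x))⟩, ?_⟩
      rintro _ ⟨⟨B, hB, rfl⟩, hxB⟩
      rw [P.part_eq_of_mem hB (hP.mem_of_apply_mem_image hB hxB)])
    (by
      simp only [mem_image, not_exists, not_and]
      exact fun B hB h => P.ne_empty hB (image_eq_empty.1 h))

lemma parts_image (P : Finpartition (univ : Finset W)) (hP : IsUnionOfFibres c P) :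
    (P.image hP).parts = P.parts.image (Finset.image c) := rfl

lemma card_parts_image (P : Finpartition (univ : Finset W)) (hP : IsUnionOfFibres c P) :
    #(P.image hP).parts = #P.parts := by
  refine card_image_of_injOn fun B hB B' hB' h => ?_
  rw [← hP.filter_apply_mem_image hB, ← hP.filter_apply_mem_image hB']
  simp only [h]

variable (c) in
def comap (Q : Finpartition (univ.image c)) : Finpartition (univ : Finset W) :=
  ofExistsUnique (Q.parts.image fun C => univ.filter fun x => c x ∈ C)
    (fun _ _ => subset_univ _)
    (by
      simp only [mem_image]
      intro x _
      have hcx : c x ∈ univ.image c := mem_image_of_mem c (mem_univ x)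
      refine ⟨_, ⟨⟨_, Q.part_mem.2 hcx, rfl⟩, mem_filter.2 ⟨mem_univ x, Q.mem_part_self.2 hcx⟩⟩, ?_⟩
      rintro _ ⟨⟨C, hC, rfl⟩, hxC⟩
      rw [Q.part_eq_of_mem hC (mem_filter.1 hxC).2])
    (by
      simp only [mem_image, not_exists, not_and]
      intro C hC h
      obtain ⟨g, hg⟩ := Q.nonempty_of_mem_parts hC
      obtain ⟨x, -, rfl⟩ := mem_image.1 (Q.le hC hg)
      exact (filter_eq_empty_iff.1 h) (mem_univ x) hg)

lemma parts_comap (Q : Finpartition (univ.image c)) :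
    (Q.comap c).parts = Q.parts.image fun C => univ.filter fun x => c x ∈ C := rfl

lemma isUnionOfFibres_comap (Q : Finpartition (univ.image c)) :
    IsUnionOfFibres c (Q.comap c) := by
  have hpart : ∀ x, (Q.comap c).part x = univ.filter fun y => c y ∈ Q.part (c x) := fun x => by
    have hcx : c x ∈ univ.image c := mem_image_of_mem c (mem_univ x)
    exact part_eq_of_mem _ (mem_image_of_mem _ (Q.part_mem.2 hcx))
      (mem_filter.2 ⟨mem_univ x, Q.mem_part_self.2 hcx⟩)
  intro x y hxy
  rw [hpart, hpart, hxy]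

lemma comap_image (P : Finpartition (univ : Finset W)) (hP : IsUnionOfFibres c P) :
    (P.image hP).comap c = P := by
  refine Finpartition.ext ?_
  rw [parts_comap, parts_image, image_image]
  exact (image_congr fun B hB => hP.filter_apply_mem_image hB).trans image_id

lemma image_comap (Q : Finpartition (univ.image c)) :
    (Q.comap c).image (isUnionOfFibres_comap Q) = Q := by
  have himage : ∀ C ∈ Q.parts, (univ.filter fun x => c x ∈ C).image c = C := fun C hC => by
    ext g
    simp only [mem_image, mem_filter, mem_univ, true_and]
    refine ⟨fun ⟨x, hx, hxg⟩ => hxg ▸ hx, fun hg => ?_⟩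
    obtain ⟨x, -, rfl⟩ := mem_image.1 (Q.le hC hg)
    exact ⟨x, hg, rfl⟩
  refine Finpartition.ext ?_
  rw [parts_image, parts_comap, image_image]
  exact (image_congr himage).trans image_id

lemma sum_filter_isUnionOfFibres {M : Type*} [AddCommMonoid M] (f : ℕ → M) :
    ∑ P ∈ univ.filter (IsUnionOfFibres c), f #P.parts
      = ∑ Q : Finpartition (univ.image c), f #Q.parts :=
  sum_bij' (fun P hP => P.image (mem_filter.1 hP).2) (fun Q _ => Q.comap c)
    (fun _ _ => mem_univ _) (fun Q _ => mem_filter.2 ⟨mem_univ _, isUnionOfFibres_comap Q⟩)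
    (fun P _ => comap_image P _) (fun Q _ => image_comap Q)
    (fun P _ => by rw [card_parts_image])

end Fibres

end Finpartition

section Graph

variable {V : Type*} [Fintype V] [DecidableEq V] (G : SimpleGraph V) [DecidableRel G.Adj]

def edgesWithinParts (P : Finpartition (univ : Finset V)) : Finset (Sym2 V) :=
  P.parts.biUnion (edgesWithin G)

variable {G}

lemma mk_mem_edgesWithinParts {P : Finpartition (univ : Finset V)} {x y : V} :
    s(x, y) ∈ edgesWithinParts G P ↔ G.Adj x y ∧ P.part x = P.part y := by
  rw [← P.mem_part_iff_part_eq_part (mem_univ x) (mem_univ y), P.mem_part_iff_exists]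
  simp only [edgesWithinParts, edgesWithin, mem_biUnion, mem_filter, mem_edgeFinset,
    mem_edgeSet, Sym2.forall_mem_pair]
  constructor
  · rintro ⟨B, hB, hxy, hxB, hyB⟩
    exact ⟨hxy, B, hB, hxB, hyB⟩
  · rintro ⟨hxy, B, hB, hxB, hyB⟩
    exact ⟨B, hB, hxy, hxB, hyB⟩

lemma edgesWithinParts_subset (P : Finpartition (univ : Finset V)) :
    edgesWithinParts G P ⊆ edgesWithin G univ := by
  intro e he
  obtain ⟨B, -, he⟩ := mem_biUnion.1 he
  exact mem_filter.2 ⟨(mem_filter.1 he).1, fun x _ => mem_univ x⟩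

lemma prod_parts_prod_edgesWithin {M : Type*} [CommMonoid M] (P : Finpartition (univ : Finset V))
    (f : Sym2 V → M) :
    ∏ B ∈ P.parts, ∏ e ∈ edgesWithin G B, f e = ∏ e ∈ edgesWithinParts G P, f e := by
  refine (prod_biUnion fun B hB B' hB' hne => disjoint_left.2 fun e he he' => hne ?_).symm
  exact P.eq_of_mem_parts hB hB' ((mem_filter.1 he).2 _ (Sym2.out_fst_mem e))
    ((mem_filter.1 he').2 _ (Sym2.out_fst_mem e))

lemma subset_edgesWithinParts_iff {A : Finset (Sym2 V)} (hA : A ⊆ edgesWithin G univ)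
    (P : Finpartition (univ : Finset V)) :
    A ⊆ edgesWithinParts G P
      ↔ P.IsUnionOfFibres (fromEdgeSet (A : Set (Sym2 V))).connectedComponentMk := by
  simp only [Finpartition.IsUnionOfFibres, ConnectedComponent.eq,
    reachable_fromEdgeSet_eq_reflTransGen_toRel]
  constructor
  · intro h x y hxy
    induction hxy with
    | refl => rfl
    | tail _ hyz ih => exact ih.trans (mk_mem_edgesWithinParts.1 (h hyz)).2
  · intro h e he
    induction e using Sym2.ind with
    | _ x y =>
      have hxy : G.Adj x y := mem_edgeFinset.1 (mem_filter.1 (hA he)).1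
      exact mk_mem_edgesWithinParts.2 ⟨hxy, h x y (.single he)⟩

lemma kcomp_univ (A : Finset (Sym2 V)) :
    kcomp univ A = Nat.card (fromEdgeSet (A : Set (Sym2 V))).ConnectedComponent := by
  rw [kcomp, coe_univ]
  exact Nat.card_congr (Iso.connectedComponentEquiv (induceUnivIso _))

lemma sum_filter_subset_edgesWithinParts {R : Type*} [CommRing R] (q : R)
    {A : Finset (Sym2 V)} (hA : A ⊆ edgesWithin G univ) :
    ∑ P ∈ univ.filter (fun P => A ⊆ edgesWithinParts G P), ∏ j ∈ range #P.parts, (q - j)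
      = q ^ kcomp univ A := by
  classical
  have : Fintype (fromEdgeSet (A : Set (Sym2 V))).ConnectedComponent := Fintype.ofFinite _
  rw [filter_congr fun P _ => subset_edgesWithinParts_iff hA P,
    Finpartition.sum_filter_isUnionOfFibres (fun k => ∏ j ∈ range k, (q - j)),
    Finpartition.sum_prod_range_sub_card_parts, kcomp_univ,
    image_univ_of_surjective (fun C => C.exists_rep), card_univ, Nat.card_eq_fintype_card]

end Graph

theorem stmt9 {V : Type*} [Fintype V] [DecidableEq V] {R : Type*} [CommRing R]
    (G : SimpleGraph V) [DecidableRel G.Adj] (v : Sym2 V → R) (q : R) :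
    Zmv G Finset.univ q v
      = ∑ π : Finpartition (Finset.univ : Finset V),
          (∏ j ∈ Finset.range π.parts.card, (q - (j : R))) *
            ∏ B ∈ π.parts, ∏ e ∈ edgesWithin G B, (1 + v e) := by
  calc Zmv G univ q v
      = ∑ A ∈ (edgesWithin G univ).powerset,
          (∑ π ∈ univ.filter (fun π => A ⊆ edgesWithinParts G π),
            ∏ j ∈ range #π.parts, (q - j)) * ∏ e ∈ A, v e :=
        sum_congr rfl fun A hA => by
          rw [sum_filter_subset_edgesWithinParts q (mem_powerset.1 hA)]
    _ = ∑ π : Finpartition (univ : Finset V), ∑ A ∈ (edgesWithinParts G π).powerset,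
          (∏ j ∈ range #π.parts, (q - j)) * ∏ e ∈ A, v e := by
        simp_rw [sum_mul]
        refine sum_comm' fun A π => ?_
        simp only [mem_powerset, mem_filter, mem_univ, true_and, and_true]
        exact ⟨fun h => h.2, fun h => ⟨h.trans (edgesWithinParts_subset π), h⟩⟩
    _ = _ := by simp_rw [← mul_sum, prod_parts_prod_edgesWithin, prod_one_add]
end

section
/- Let G = (V,E) be a finite simple graph, let R be a commutative ring, let v : E → R be edge weights, let q1, q2 ∈ R, and fix a vertex i ∈ V. Then Ẑ_G(q1 + q2, v) = Σ_{W ⊆ V, i ∈ W} Ẑ_{G[W]}(q1, v) · Z_{G[V∖W]}(q2, v), where the sum runs over all subsets W of V containing i. -/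
open Finset SimpleGraph

/-!
Multiplying out `Ẑ_{G[W]}(q₁) · Z_{G[V∖W]}(q₂)` gives a sum over the edge sets `A ⊆ E` with no
edge across the cut `(W, V∖W)`; exchanging the two sums, fix `A` first. An edge set `A` has no
edge across the cut exactly when `W` is a union of connected components of `(V, A)`. If `W`
consists of `t` of the `k(A)` components, one of them the component of `i`, its term is
`q₁^(t-1) q₂^(k(A)-t)`, and summing over the choice of the other components is the binomial
expansion of `(q₁ + q₂)^(k(A)-1)`.
-/

namespace Finset

theorem sum_powerset_union_of_disjoint {α M : Type*} [DecidableEq α] [AddCommMonoid M]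
    {s t : Finset α} (h : Disjoint s t) (f : Finset α → M) :
    ∑ A ∈ (s ∪ t).powerset, f A = ∑ B ∈ s.powerset, ∑ C ∈ t.powerset, f (B ∪ C) := by
  rw [← sum_product']
  refine (sum_nbij' (fun p => p.1 ∪ p.2) (fun A => (A ∩ s, A ∩ t)) ?_ ?_ ?_ ?_ ?_).symm
  · intro p hp
    simp only [mem_product, mem_powerset] at hp ⊢
    exact union_subset_union hp.1 hp.2
  · intro A _
    simp only [mem_product, mem_powerset]
    exact ⟨inter_subset_right, inter_subset_right⟩
  · rintro ⟨B, C⟩ hBC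
    simp only [mem_product, mem_powerset] at hBC
    refine Prod.ext ?_ ?_ <;> dsimp only
    · rw [union_inter_distrib_right, inter_eq_left.2 hBC.1,
        disjoint_iff_inter_eq_empty.1 (h.symm.mono_left hBC.2), union_empty]
    · rw [union_inter_distrib_right, inter_eq_left.2 hBC.2,
        disjoint_iff_inter_eq_empty.1 (h.mono_left hBC.1), empty_union]
  · intro A hA
    rw [← inter_union_distrib_left, inter_eq_left.2 (mem_powerset.1 hA)]
  · intro p _
    rfl

theorem sum_filter_mem_pow_card_sub_one_mul_eq_add_pow {ι R : Type*} [Fintype ι] [DecidableEq ι]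
    [CommSemiring R] (x : ι) (a b : R) :
    ∑ T ∈ univ.filter (x ∈ ·), a ^ (#T - 1) * b ^ (Fintype.card ι - #T)
      = (a + b) ^ (Fintype.card ι - 1) := by
  have hfilter : univ.filter (x ∈ ·) = (univ.erase x).powerset.image (insert x) := by
    ext T
    simp only [mem_filter, mem_univ, true_and, mem_image, mem_powerset]
    refine ⟨fun hT => ⟨T.erase x, erase_subset_erase x (subset_univ T), insert_erase hT⟩, ?_⟩
    rintro ⟨S, -, rfl⟩
    exact mem_insert_self x S
  have hcard : #(univ.erase x) = Fintype.card ι - 1 := by simp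
  have hx : ∀ S ∈ (univ.erase x).powerset, x ∉ S := fun S hS h => by
    simpa using mem_powerset.mp hS h
  rw [hfilter, sum_image fun S hS S' hS' h => by
      rw [← erase_insert (hx S hS), h, erase_insert (hx S' hS')],
    ← hcard, ← sum_pow_mul_eq_add_pow]
  refine sum_congr rfl fun S hS => ?_
  rw [card_insert_of_notMem (hx S hS), hcard, Nat.add_sub_cancel, Nat.sub_sub, add_comm]

end Finset

namespace SimpleGraph

variable {V : Type*}

theorem Reachable.mem_of_forall_adj {H : SimpleGraph V} {s : Set V}
    (hs : ∀ ⦃x y⦄, H.Adj x y → x ∈ s → y ∈ s) {x y : V} (h : H.Reachable x y) (hx : x ∈ s) :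
    y ∈ s := by
  rw [reachable_iff_reflTransGen] at h
  induction h with
  | refl => exact hx
  | tail _ hab ih => exact hs hab ih

theorem natCard_connectedComponent_induce_preimage (H : SimpleGraph V)
    (S : Set H.ConnectedComponent) :
    Nat.card (H.induce (H.connectedComponentMk ⁻¹' S)).ConnectedComponent = Nat.card S := by
  let f : (H.induce (H.connectedComponentMk ⁻¹' S)).ConnectedComponent → S :=
    ConnectedComponent.lift (fun x => ⟨H.connectedComponentMk x, x.2⟩) fun _ _ p _ =>
      Subtype.ext (ConnectedComponent.sound (p.map (Embedding.induce _).toHom).reachable)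
  refine Nat.card_eq_of_bijective f ⟨?_, ?_⟩
  · classical
    rintro ⟨x⟩ ⟨y⟩ hxy
    obtain ⟨w⟩ := ConnectedComponent.exact (congrArg Subtype.val hxy)
    have hw : ∀ z ∈ w.support, z ∈ H.connectedComponentMk ⁻¹' S := fun z hz => by
      rw [Set.mem_preimage, ← ConnectedComponent.sound (w.takeUntil z hz).reachable]
      exact x.2
    exact ConnectedComponent.sound (w.induce _ hw).reachable
  · rintro ⟨C, hC⟩
    obtain ⟨x, rfl⟩ := C.exists_rep
    exact ⟨(H.induce _).connectedComponentMk ⟨x, hC⟩, rfl⟩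

section Fintype

variable [Fintype V] (H : SimpleGraph V) [DecidableEq H.ConnectedComponent]

def unionSupp (T : Finset H.ConnectedComponent) : Finset V :=
  univ.filter (H.connectedComponentMk · ∈ T)

variable {H}

@[simp]
theorem mem_unionSupp {T : Finset H.ConnectedComponent} {x : V} :
    x ∈ H.unionSupp T ↔ H.connectedComponentMk x ∈ T := by
  simp [unionSupp]

theorem coe_unionSupp (T : Finset H.ConnectedComponent) :
    (H.unionSupp T : Set V) = H.connectedComponentMk ⁻¹' T := by
  ext; simp

theorem unionSupp_injective : Function.Injective H.unionSupp := fun T T' h => by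
  ext C
  refine C.ind fun x => ?_
  rw [← mem_unionSupp, h, mem_unionSupp]

theorem natCard_connectedComponent_induce_unionSupp (T : Finset H.ConnectedComponent) :
    Nat.card (H.induce (H.unionSupp T : Set V)).ConnectedComponent = #T := by
  rw [coe_unionSupp, natCard_connectedComponent_induce_preimage, Nat.card_coe_set_eq,
    Set.ncard_coe_finset]

theorem exists_unionSupp_eq_iff {W : Finset V} :
    (∃ T, H.unionSupp T = W) ↔ ∀ ⦃x y⦄, H.Adj x y → x ∈ W → y ∈ W := by
  constructor
  · rintro ⟨T, rfl⟩ x y hxy hx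
    rw [mem_unionSupp] at hx ⊢
    rwa [← ConnectedComponent.connectedComponentMk_eq_of_adj hxy]
  · intro hW
    refine ⟨W.image H.connectedComponentMk, ?_⟩
    ext x
    simp only [mem_unionSupp, mem_image]
    refine ⟨fun ⟨y, hy, hyx⟩ => ?_, fun hx => ⟨x, hx, rfl⟩⟩
    exact (ConnectedComponent.exact hyx).mem_of_forall_adj (s := (W : Set V)) hW hy

variable [Fintype H.ConnectedComponent]

theorem unionSupp_univ : H.unionSupp univ = univ := by
  ext; simp

theorem sdiff_unionSupp [DecidableEq V] (T : Finset H.ConnectedComponent) :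
    univ \ H.unionSupp T = H.unionSupp (univ \ T) := by
  ext; simp

end Fintype

end SimpleGraph

section Tutte

variable {V : Type*} [Fintype V] [DecidableEq V]

theorem kcomp_unionSupp (A : Finset (Sym2 V))
    [DecidableEq (fromEdgeSet (A : Set (Sym2 V))).ConnectedComponent]
    (T : Finset (fromEdgeSet (A : Set (Sym2 V))).ConnectedComponent) :
    kcomp ((fromEdgeSet (A : Set (Sym2 V))).unionSupp T) A = #T :=
  natCard_connectedComponent_induce_unionSupp T

theorem kcomp_union_eq_left {W : Finset V} {B C : Finset (Sym2 V)}
    (hC : ∀ e ∈ C, ∃ x ∈ e, x ∉ W) : kcomp W (B ∪ C) = kcomp W B := by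
  unfold kcomp
  congr 2
  ext ⟨x, hx⟩ ⟨y, hy⟩
  simp only [comap_adj, Function.Embedding.coe_subtype, fromEdgeSet_adj, coe_union,
    Set.mem_union, mem_coe]
  refine and_congr_left fun _ => or_iff_left fun hxy => ?_
  obtain ⟨z, hz, hzW⟩ := hC _ hxy
  rcases Sym2.mem_iff.1 hz with rfl | rfl <;> contradiction

variable (G : SimpleGraph V) [DecidableRel G.Adj]

theorem edgesWithin_univ : edgesWithin G univ = G.edgeFinset := by
  simp [edgesWithin]

theorem edgesWithin_mono {U W : Finset V} (h : U ⊆ W) : edgesWithin G U ⊆ edgesWithin G W :=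
  fun _ he => mem_filter.2 ⟨(mem_filter.1 he).1, fun x hx => h ((mem_filter.1 he).2 x hx)⟩

theorem exists_mem_notMem_of_mem_edgesWithin {U W : Finset V} (h : Disjoint U W)
    {e : Sym2 V} (he : e ∈ edgesWithin G U) : ∃ x ∈ e, x ∉ W :=
  ⟨e.out.1, e.out_fst_mem, disjoint_left.1 h ((mem_filter.1 he).2 _ e.out_fst_mem)⟩

theorem disjoint_edgesWithin {U W : Finset V} (h : Disjoint U W) :
    Disjoint (edgesWithin G U) (edgesWithin G W) := by
  refine disjoint_left.2 fun e hU hW => ?_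
  obtain ⟨x, hx, hxW⟩ := exists_mem_notMem_of_mem_edgesWithin G h hU
  exact hxW ((mem_filter.1 hW).2 x hx)

theorem subset_edgesWithin_union_sdiff_iff {A : Finset (Sym2 V)} (hA : A ⊆ G.edgeFinset)
    {W : Finset V} :
    A ⊆ edgesWithin G W ∪ edgesWithin G (univ \ W) ↔
      ∀ ⦃x y⦄, (fromEdgeSet (A : Set (Sym2 V))).Adj x y → x ∈ W → y ∈ W := by
  constructor
  · intro h x y hxy hx
    rw [fromEdgeSet_adj] at hxy
    rcases mem_union.1 (h (mem_coe.1 hxy.1)) with hW | hW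
    · exact (mem_filter.1 hW).2 y (Sym2.mem_mk_right x y)
    · exact absurd hx (mem_sdiff.1 ((mem_filter.1 hW).2 x (Sym2.mem_mk_left x y))).2
  · intro h e he
    induction e using Sym2.ind with | _ x y =>
    have hxy : G.Adj x y := by simpa using hA he
    have hxW : x ∈ W ↔ y ∈ W :=
      ⟨h ((fromEdgeSet_adj _).2 ⟨he, hxy.ne⟩),
        h ((fromEdgeSet_adj _).2 ⟨Sym2.eq_swap ▸ he, hxy.ne.symm⟩)⟩
    simp only [edgesWithin, mem_union, mem_filter, Sym2.forall_mem_pair, mem_sdiff, mem_univ,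
      true_and, hA he, hxW]
    tauto

theorem ZhatMv_mul_Zmv_sdiff {R : Type*} [CommRing R] (W : Finset V) (q1 q2 : R)
    (v : Sym2 V → R) :
    ZhatMv G W q1 v * Zmv G (univ \ W) q2 v =
      ∑ A ∈ (edgesWithin G W ∪ edgesWithin G (univ \ W)).powerset,
        q1 ^ (kcomp W A - 1) * q2 ^ kcomp (univ \ W) A * ∏ e ∈ A, v e := by
  have hW : Disjoint W (univ \ W) := disjoint_sdiff
  rw [sum_powerset_union_of_disjoint (disjoint_edgesWithin G hW), ZhatMv, Zmv, sum_mul_sum]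
  refine sum_congr rfl fun B hB => sum_congr rfl fun C hC => ?_
  have hB' : ∀ e ∈ B, ∃ x ∈ e, x ∉ univ \ W := fun e he =>
    exists_mem_notMem_of_mem_edgesWithin G hW (mem_powerset.1 hB he)
  have hC' : ∀ e ∈ C, ∃ x ∈ e, x ∉ W := fun e he =>
    exists_mem_notMem_of_mem_edgesWithin G hW.symm (mem_powerset.1 hC he)
  rw [kcomp_union_eq_left hC', union_comm, kcomp_union_eq_left hB', union_comm,
    prod_union (disjoint_of_subset_left (mem_powerset.1 hB) <|
      disjoint_of_subset_right (mem_powerset.1 hC) (disjoint_edgesWithin G hW))]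
  ring

theorem sum_filter_subset_edgesWithin_union_sdiff {R : Type*} [CommRing R]
    {A : Finset (Sym2 V)} (hA : A ⊆ G.edgeFinset) (q1 q2 : R) (i : V) :
    ∑ W ∈ univ.filter (fun W => i ∈ W ∧ A ⊆ edgesWithin G W ∪ edgesWithin G (univ \ W)),
      q1 ^ (kcomp W A - 1) * q2 ^ kcomp (univ \ W) A = (q1 + q2) ^ (kcomp univ A - 1) := by
  classical
  set H := fromEdgeSet (A : Set (Sym2 V))
  have hfilter : univ.filter (fun W => i ∈ W ∧ A ⊆ edgesWithin G W ∪ edgesWithin G (univ \ W))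
      = (univ.filter (H.connectedComponentMk i ∈ ·)).image H.unionSupp := by
    ext W
    simp only [mem_filter, mem_univ, true_and, mem_image, subset_edgesWithin_union_sdiff_iff G hA,
      ← exists_unionSupp_eq_iff]
    constructor
    · rintro ⟨hi, T, rfl⟩
      exact ⟨T, mem_unionSupp.1 hi, rfl⟩
    · rintro ⟨T, hi, rfl⟩
      exact ⟨mem_unionSupp.2 hi, T, rfl⟩
  have hcomp : kcomp univ A = Fintype.card H.ConnectedComponent := by
    rw [← unionSupp_univ (H := H), kcomp_unionSupp, card_univ]
  rw [hfilter, sum_image fun T _ T' _ h => unionSupp_injective h, hcomp,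
    ← sum_filter_mem_pow_card_sub_one_mul_eq_add_pow]
  refine sum_congr rfl fun T _ => ?_
  rw [sdiff_unionSupp, kcomp_unionSupp, kcomp_unionSupp, card_univ_sdiff]

end Tutte

theorem stmt13 {V : Type*} [Fintype V] [DecidableEq V] {R : Type*} [CommRing R]
    (G : SimpleGraph V) [DecidableRel G.Adj] (v : Sym2 V → R) (q1 q2 : R) (i : V) :
    ZhatMv G Finset.univ (q1 + q2) v
      = ∑ W ∈ Finset.univ.filter (fun W : Finset V => i ∈ W),
          ZhatMv G W q1 v * Zmv G (Finset.univ \ W) q2 v := by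
  have hcut : ∀ W, edgesWithin G W ∪ edgesWithin G (univ \ W) ⊆ edgesWithin G univ := fun W =>
    union_subset (edgesWithin_mono G (subset_univ W)) (edgesWithin_mono G (subset_univ _))
  simp_rw [ZhatMv_mul_Zmv_sdiff]
  rw [sum_comm' (t' := (edgesWithin G univ).powerset) (s' := fun A =>
    univ.filter (fun W => i ∈ W ∧ A ⊆ edgesWithin G W ∪ edgesWithin G (univ \ W)))]
  · refine sum_congr rfl fun A hA => ?_
    rw [← sum_mul, sum_filter_subset_edgesWithin_union_sdiff G _ q1 q2 i]
    exact edgesWithin_univ G ▸ mem_powerset.1 hA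
  · intro W A
    simp only [mem_filter, mem_univ, true_and, mem_powerset]
    exact ⟨fun ⟨hi, hA⟩ => ⟨⟨hi, hA⟩, hA.trans (hcut W)⟩, fun ⟨⟨hi, hA⟩, _⟩ => ⟨hi, hA⟩⟩
end
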